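/- With N = p1^m and D_0, ..., D_{p1−1} as in the context: every a ∈ {0, 1, ..., N−1} has a unique representation a ≡ −i_a + p1^{m−1}·j_a (mod N) with 0 ≤ i_a ≤ p1^{m−1}−1 and 0 ≤ j_a ≤ p1−1; and if a, a' ∈ {0, 1, ..., N−1} satisfy j_a = j_{a'}, then for every k with 0 ≤ k ≤ p1−1, Σ_{x ∈ D_k} ψ(γ^a · x) = Σ_{x ∈ D_k} ψ(γ^{a'} · x). In other words, the character sum of ψ over γ^a·D_k depends only on j_a and k, not on i_a. -/

import Mathlib

open scoped Classical

noncomputable section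

/-!
The sum of `ψ(γ^a x)` over `D_k` splits into the `M = p1^(m-1)` consecutive Gauss periods
`η_c = ∑_{x ∈ C_c} ψ(x)`, `a + kM ≤ c < a + kM + M`. The period `η_c` depends only on `c mod N`
and is invariant under `c ↦ p c`, since the Frobenius preserves the trace. As `⟨p⟩` has index 2 in
`(ℤ/N)ˣ`, it contains every unit of odd order, in particular the kernel of reduction mod `p1`,
which has order `p1^(m-1)`. For `M ∤ c` this kernel contains `u` with `u c ≡ c + M`, so
`η_{c+M} = η_c`: sliding a window of `M` consecutive periods by one step leaves its sum unchanged
unless the window starts at a multiple of `M`. The windows for `a ≡ -i + Mj` with `0 ≤ i < M` all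
start in `(M(j+k) - M, M(j+k)]`, hence have the same sum.
-/

open Finset

section CosetSum

variable {G R : Type*} [CommGroup G] [AddCommMonoid R]

def cosetSum (H : Subgroup G) [Fintype H] (φ : G → R) (g : G) : R :=
  ∑ h : H, φ (g * h)

variable {H : Subgroup G} [Fintype H] {φ : G → R}

theorem cosetSum_mul_of_mem (g : G) {x : G} (hx : x ∈ H) :
    cosetSum H φ (g * x) = cosetSum H φ g :=
  Fintype.sum_equiv (Equiv.mulLeft ⟨x, hx⟩) _ _ fun h => by simp [mul_assoc]

theorem cosetSum_pow {n : ℕ} (hn : Function.Injective fun g : G => g ^ n)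
    (hφ : ∀ g, φ (g ^ n) = φ g) (g : G) : cosetSum H φ (g ^ n) = cosetSum H φ g := by
  have hbij : Function.Bijective fun h : H => h ^ n :=
    Finite.injective_iff_bijective.mp fun h h' hh => Subtype.ext (hn (congrArg Subtype.val hh))
  calc cosetSum H φ (g ^ n) = ∑ h : H, φ (g ^ n * ↑(h ^ n)) :=
        (Fintype.sum_bijective _ hbij _ _ fun _ => rfl).symm
    _ = cosetSum H φ g := by simp only [cosetSum, Subgroup.coe_pow, ← mul_pow, hφ]

end CosetSum

theorem Subgroup.mem_of_index_eq_two_of_odd_orderOf {G : Type*} [Group G] {H : Subgroup G}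
    (hH : H.index = 2) {g : G} (hg : Odd (orderOf g)) : g ∈ H := by
  have := Subgroup.normal_of_index_eq_two hH
  obtain ⟨k, hk⟩ := hg
  have hg : g = (g ^ (k + 1)) ^ H.index := by
    rw [hH, ← pow_mul, show (k + 1) * 2 = orderOf g + 1 by omega, pow_succ, pow_orderOf_eq_one,
      one_mul]
  rw [hg]
  exact H.pow_index_mem _

namespace ZMod

theorem card_ker_unitsMap_prime_pow {p : ℕ} (hp : p.Prime) (m : ℕ) :
    Nat.card (unitsMap (dvd_pow_self p m.succ_ne_zero)).ker = p ^ m := by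
  have := Fact.mk hp
  have hcard := (unitsMap (dvd_pow_self p m.succ_ne_zero)).ker.card_mul_index
  rw [Subgroup.index_ker, MonoidHom.range_eq_top.mpr (unitsMap_surjective _), Subgroup.card_top,
    Nat.card_eq_fintype_card (α := (ZMod p)ˣ),
    Nat.card_eq_fintype_card (α := (ZMod (p ^ (m + 1)))ˣ), card_units, card_units_eq_totient,
    Nat.totient_prime_pow_succ hp] at hcard
  exact Nat.eq_of_mul_eq_mul_right (Nat.sub_pos_of_lt hp.one_lt) hcard

theorem odd_orderOf_of_mem_ker_unitsMap {p : ℕ} (hp : p.Prime) (hodd : Odd p) (m : ℕ)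
    {u : (ZMod (p ^ (m + 1)))ˣ} (hu : u ∈ (unitsMap (dvd_pow_self p m.succ_ne_zero)).ker) :
    Odd (orderOf u) :=
  (hodd.pow (n := m)).of_dvd_nat <|
    card_ker_unitsMap_prime_pow hp m ▸ Subgroup.orderOf_dvd_natCard _ hu

theorem exists_mem_ker_unitsMap_mul_eq_add {p : ℕ} (hp : p.Prime) (m : ℕ) {c : ℕ}
    (hc : ¬ p ^ m ∣ c) :
    ∃ u ∈ (unitsMap (dvd_pow_self p m.succ_ne_zero)).ker,
      (u : ZMod (p ^ (m + 1))) * c = c + p ^ m := by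
  have hc0 : c ≠ 0 := by rintro rfl; exact hc (dvd_zero _)
  obtain ⟨v, w, hpw, rfl⟩ := Nat.exists_eq_pow_mul_and_not_dvd hc0 p hp.ne_one
  obtain ⟨d, rfl⟩ : ∃ d, m = v + 1 + d := by
    refine ⟨m - (v + 1), ?_⟩
    by_contra h
    exact hc (Dvd.dvd.mul_right (pow_dvd_pow p (by omega)) w)
  set x : ZMod (p ^ (v + 1 + d + 1)) := p * (p ^ d * (w : ZMod (p ^ (v + 1 + d + 1)))⁻¹)
  have hx : IsNilpotent x :=
    (Commute.all _ _).isNilpotent_mul_right ⟨_, by rw [← Nat.cast_pow, natCast_self]⟩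
  refine ⟨hx.isUnit_one_add.unit, ?_, ?_⟩
  · rw [MonoidHom.mem_ker, unitsMap_def, ← Units.val_eq_one, Units.coe_map]
    simp [x]
  · have hw : (w : ZMod (p ^ (v + 1 + d + 1))) * (w : ZMod _)⁻¹ = 1 :=
      coe_mul_inv_eq_one w (Nat.Coprime.pow_right _ ((hp.coprime_iff_not_dvd).mpr hpw).symm)
    simp only [IsUnit.unit_spec, x]
    push_cast
    linear_combination (p : ZMod (p ^ (v + 1 + d + 1))) ^ (v + 1 + d) * hw

end ZMod

theorem exists_pow_mul_eq_add {p₁ m p : ℕ} (hp₁ : p₁.Prime) (hodd : Odd p₁)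
    (hcop : p.Coprime (p₁ ^ (m + 1)))
    (hindex : 2 * orderOf (p : ZMod (p₁ ^ (m + 1))) = (p₁ ^ (m + 1)).totient)
    {c : ℕ} (hc : ¬ p₁ ^ m ∣ c) :
    ∃ e : ℕ, (p : ZMod (p₁ ^ (m + 1))) ^ e * c = c + p₁ ^ m := by
  have := Fact.mk hp₁
  set g := ZMod.unitOfCoprime p hcop
  have horder : orderOf g = orderOf (p : ZMod (p₁ ^ (m + 1))) := by
    rw [← orderOf_units, ZMod.coe_unitOfCoprime]
  have hindex : (Subgroup.zpowers g).index = 2 := by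
    have hcard := (Subgroup.zpowers g).card_mul_index
    rw [Nat.card_zpowers, horder, Nat.card_eq_fintype_card, ZMod.card_units_eq_totient,
      ← hindex, mul_comm 2] at hcard
    exact Nat.eq_of_mul_eq_mul_left (horder ▸ orderOf_pos g) hcard
  obtain ⟨u, hu, huc⟩ := ZMod.exists_mem_ker_unitsMap_mul_eq_add hp₁ m hc
  have hug : u ∈ Subgroup.zpowers g := Subgroup.mem_of_index_eq_two_of_odd_orderOf hindex
    (ZMod.odd_orderOf_of_mem_ker_unitsMap hp₁ hodd m hu)
  obtain ⟨e, rfl⟩ := mem_powers_iff_mem_zpowers.mpr hug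
  exact ⟨e, by simpa [g] using huc⟩

theorem eq_and_eq_of_neg_add_mul_eq {M P N : ℕ} (hN : M * P = N) {i j i' j' : ℕ} (hi : i < M)
    (hi' : i' < M) (hj : j < P) (hj' : j' < P)
    (h : -(i : ZMod N) + ((M * j : ℕ) : ZMod N) = -(i' : ZMod N) + ((M * j' : ℕ) : ZMod N)) :
    i = i' ∧ j = j' := by
  have hii : i = i' := by
    push_cast at h
    have hM := congrArg (ZMod.castHom (Dvd.intro P hN) (ZMod M)) h
    simp only [map_add, map_neg, map_mul, map_natCast, ZMod.natCast_self, zero_mul, add_zero,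
      neg_inj, ZMod.natCast_eq_natCast_iff' _ _ M] at hM
    rwa [Nat.mod_eq_of_lt hi, Nat.mod_eq_of_lt hi'] at hM
  subst hii
  rw [add_right_inj, ZMod.natCast_eq_natCast_iff, ← hN] at h
  exact ⟨rfl, (Nat.ModEq.mul_left_cancel' (by omega) h).eq_of_lt_of_lt hj hj'⟩

theorem existsUnique_neg_add_mul {M P N : ℕ} [NeZero N] (hN : M * P = N) (a : ZMod N) :
    ∃! ij : ℕ × ℕ, (ij.1 < M ∧ ij.2 < P) ∧
      a = -(ij.1 : ZMod N) + ((M * ij.2 : ℕ) : ZMod N) := by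
  obtain ⟨⟨i, j⟩, hij, ha⟩ := Finset.surj_on_of_inj_on_of_card_le
    (s := range M ×ˢ range P) (t := univ)
    (fun ij _ => -(ij.1 : ZMod N) + ((M * ij.2 : ℕ) : ZMod N))
    (fun _ _ => mem_univ _)
    (fun _ _ h₁ h₂ h => by
      simp only [mem_product, mem_range] at h₁ h₂
      exact Prod.ext_iff.mpr (eq_and_eq_of_neg_add_mul_eq hN h₁.1 h₂.1 h₁.2 h₂.2 h))
    (by simp [hN]) a (mem_univ a)
  simp only [mem_product, mem_range] at hij
  refine ⟨(i, j), ⟨hij, ha⟩, fun ⟨i', j'⟩ ⟨hij', ha'⟩ => ?_⟩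
  obtain ⟨rfl, rfl⟩ := eq_and_eq_of_neg_add_mul_eq hN hij'.1 hij.1 hij'.2 hij.2 (ha'.symm.trans ha)
  rfl

section Window

variable {R : Type*} [AddCommMonoid R] {T : ℕ → R} {M : ℕ}

theorem sum_range_add_one_eq_of_add_eq {c : ℕ} (hc : T (c + M) = T c) :
    ∑ r ∈ range M, T (c + 1 + r) = ∑ r ∈ range M, T (c + r) := by
  cases M with
  | zero => rfl
  | succ M =>
    rw [sum_range_succ, sum_range_succ', add_zero, add_assoc, add_comm 1 M, hc]
    exact congrArg (· + T c) (sum_congr rfl fun r _ => by rw [add_assoc, add_comm 1 r])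

theorem sum_range_mul_sub_eq (hT : ∀ c, ¬ M ∣ c → T (c + M) = T c) {n i : ℕ} (hn : 0 < n)
    (hi : i < M) : ∑ r ∈ range M, T (M * n - i + r) = ∑ r ∈ range M, T (M * n + r) := by
  induction i with
  | zero => rfl
  | succ i ih =>
    have hMn : M ≤ M * n := Nat.le_mul_of_pos_right M hn
    rw [← ih (by omega), show M * n - i = M * n - (i + 1) + 1 by omega]
    refine (sum_range_add_one_eq_of_add_eq (hT _ fun hdvd => ?_)).symm
    have : M ∣ i + 1 := by
      simpa [show M * n - (M * n - (i + 1)) = i + 1 by omega] using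
        Nat.dvd_sub (dvd_mul_right M n) hdvd
    exact absurd (Nat.le_of_dvd (by omega) this) (by omega)

theorem sum_range_eq_of_neg_add_mul {P N : ℕ} (hN : M * P = N)
    (hper : ∀ c c', c ≡ c' [MOD N] → T c = T c') (hT : ∀ c, ¬ M ∣ c → T (c + M) = T c)
    (hP : 0 < P) {b i j : ℕ} (hi : i < M)
    (hb : (b : ZMod N) = -(i : ZMod N) + ((M * j : ℕ) : ZMod N)) :
    ∑ r ∈ range M, T (b + r) = ∑ r ∈ range M, T (M * (j + P) + r) := by
  subst hN
  have hiMjP : i ≤ M * (j + P) := hi.le.trans (Nat.le_mul_of_pos_right M (by omega))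
  have hbmod : b ≡ M * (j + P) - i [MOD M * P] := by
    rw [← ZMod.natCast_eq_natCast_iff, hb, Nat.cast_sub hiMjP]
    push_cast
    rw [mul_add, ← Nat.cast_mul M P, ZMod.natCast_self]
    ring
  rw [← sum_range_mul_sub_eq hT (by omega) hi]
  exact sum_congr rfl fun r _ => hper _ _ (hbmod.add_right r)

end Window

section FiniteField

variable {F : Type*} [Field F] (p : ℕ) [Algebra (ZMod p) F]

def canonicalAddChar (y : F) : ℂ :=
  Complex.exp (2 * Real.pi * Complex.I * ((Algebra.trace (ZMod p) F y).val : ℂ) / p)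

/-- The Gauss period `η_c = ∑_{x ∈ C_c} ψ(x)` of the cyclotomic class `C_c = γ^c ⟨γ^N⟩`. -/
def gaussPeriod [Fintype F] (N : ℕ) (γ : Fˣ) (c : ℕ) : ℂ :=
  cosetSum (Subgroup.zpowers (γ ^ N)) (fun u : Fˣ => canonicalAddChar p (u : F)) (γ ^ c)

variable {p} [Fintype F] {N : ℕ} {γ : Fˣ}

theorem gaussPeriod_congr {c c' : ℕ} (h : c ≡ c' [MOD N]) :
    gaussPeriod p N γ c = gaussPeriod p N γ c' := by
  wlog hle : c ≤ c' generalizing c c'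
  · exact (this h.symm (by omega)).symm
  obtain ⟨t, ht⟩ := (Nat.modEq_iff_dvd' hle).mp h
  rw [gaussPeriod, gaussPeriod, show c' = c + N * t by omega, pow_add, pow_mul,
    cosetSum_mul_of_mem _ (Subgroup.pow_mem _ (Subgroup.mem_zpowers _) _)]

theorem sum_toFinset_eq_sum_cosetSum {R : Type*} [AddCommMonoid R] (φ : F → R) {M : ℕ}
    (hN : N ∣ orderOf γ) (hM : M ≤ N) (b : ℕ) {S : Set F}
    (hS : S = {x | ∃ i < M, ∃ t : ℕ, x = (γ : F) ^ (i + b + N * t)}) :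
    ∑ x ∈ (Set.toFinite S).toFinset, φ x =
      ∑ i ∈ range M, cosetSum (Subgroup.zpowers (γ ^ N)) (fun u : Fˣ => φ u) (γ ^ (i + b)) := by
  subst hS
  simp only [cosetSum, ← Finset.sum_product']
  symm
  refine Finset.sum_bij (fun ih _ => ((γ ^ (ih.1 + b) * ih.2 : Fˣ) : F)) ?_ ?_ ?_ fun _ _ => rfl
  · rintro ⟨i, h⟩ hi
    obtain ⟨t, ht : (γ ^ N) ^ t = h⟩ := mem_powers_iff_mem_zpowers.mpr h.2
    simp only [mem_product, mem_range, mem_univ, and_true] at hi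
    rw [Set.Finite.mem_toFinset]
    exact ⟨i, hi, t, by rw [← ht]; push_cast; ring⟩
  · rintro ⟨i, h⟩ hi ⟨i', h'⟩ hi' heq
    simp only [mem_product, mem_range, mem_univ, and_true] at hi hi'
    obtain ⟨t, ht : (γ ^ N) ^ t = h⟩ := mem_powers_iff_mem_zpowers.mpr h.2
    obtain ⟨t', ht' : (γ ^ N) ^ t' = h'⟩ := mem_powers_iff_mem_zpowers.mpr h'.2
    have hpow : γ ^ (i + b + N * t) = γ ^ (i' + b + N * t') := by
      rw [pow_add, pow_mul, ht, pow_add _ _ (N * t'), pow_mul, ht']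
      exact Units.ext heq
    have hmod := (ZMod.natCast_eq_natCast_iff _ _ N).mpr ((pow_eq_pow_iff_modEq.mp hpow).of_dvd hN)
    push_cast [ZMod.natCast_self, zero_mul, add_zero, add_left_inj] at hmod
    have hii : i = i' := by
      rw [ZMod.natCast_eq_natCast_iff'] at hmod
      rwa [Nat.mod_eq_of_lt (by omega), Nat.mod_eq_of_lt (by omega)] at hmod
    subst hii
    exact Prod.ext rfl (Subtype.ext (mul_left_cancel (Units.ext heq)))
  · intro x hx
    obtain ⟨i, hi, t, rfl⟩ := by simpa using hx
    exact ⟨(i, ⟨(γ ^ N) ^ t, Subgroup.pow_mem _ (Subgroup.mem_zpowers _) t⟩), by simpa using hi,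
      by push_cast; ring⟩

theorem sum_canonicalAddChar_eq_sum_gaussPeriod {M : ℕ} (hN : N ∣ orderOf γ) (hM : M ≤ N)
    (a b : ℕ) {S : Set F} (hS : S = {x | ∃ i < M, ∃ t : ℕ, x = (γ : F) ^ (i + b + N * t)}) :
    ∑ x ∈ (Set.toFinite S).toFinset, canonicalAddChar p ((γ : F) ^ a * x) =
      ∑ i ∈ range M, gaussPeriod p N γ (a + b + i) := by
  rw [sum_toFinset_eq_sum_cosetSum _ hN hM b hS]
  refine sum_congr rfl fun i _ => sum_congr rfl fun h _ => congrArg _ ?_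
  push_cast
  ring

variable [Fact p.Prime]

theorem FiniteField.trace_pow_char (y : F) :
    Algebra.trace (ZMod p) F (y ^ p) = Algebra.trace (ZMod p) F y := by
  have : CharP F p := charP_of_injective_algebraMap' (ZMod p) p
  simpa using Algebra.trace_eq_of_algEquiv (FiniteField.frobeniusAlgEquiv (ZMod p) F p) y

theorem canonicalAddChar_pow_char (y : F) :
    canonicalAddChar p (y ^ p) = canonicalAddChar p y := by
  rw [canonicalAddChar, canonicalAddChar, FiniteField.trace_pow_char]

theorem gaussPeriod_char_mul (c : ℕ) : gaussPeriod p N γ (p * c) = gaussPeriod p N γ c := by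
  have : CharP F p := charP_of_injective_algebraMap' (ZMod p) p
  rw [gaussPeriod, gaussPeriod, mul_comm, pow_mul]
  refine cosetSum_pow (fun u v huv => Units.ext (frobenius_inj F p ?_)) (fun u => ?_) _
  · simpa [frobenius_def] using congrArg Units.val huv
  · simpa using canonicalAddChar_pow_char (u : F)

theorem gaussPeriod_pow_char_mul (e c : ℕ) :
    gaussPeriod p N γ (p ^ e * c) = gaussPeriod p N γ c := by
  induction e with
  | zero => simp
  | succ e ih => rw [pow_succ', mul_assoc, gaussPeriod_char_mul, ih]

theorem gaussPeriod_add_of_not_dvd {p₁ m : ℕ} (hp₁ : p₁.Prime) (hodd : Odd p₁)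
    (hcop : p.Coprime (p₁ ^ (m + 1)))
    (hindex : 2 * orderOf (p : ZMod (p₁ ^ (m + 1))) = (p₁ ^ (m + 1)).totient)
    {c : ℕ} (hc : ¬ p₁ ^ m ∣ c) :
    gaussPeriod p (p₁ ^ (m + 1)) γ (c + p₁ ^ m) = gaussPeriod p (p₁ ^ (m + 1)) γ c := by
  obtain ⟨e, he⟩ := exists_pow_mul_eq_add hp₁ hodd hcop hindex hc
  rw [← gaussPeriod_pow_char_mul e c]
  exact gaussPeriod_congr ((ZMod.natCast_eq_natCast_iff _ _ _).mp (by push_cast; exact he.symm))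

end FiniteField

theorem char_sum_indep_prime_power_general
    (p1 m N p f q : ℕ)
    (hp1 : p1.Prime) (hp1_gt : 3 < p1)
    (hm : 1 ≤ m) (hN : N = p1 ^ m)
    (hp : p.Prime) (hcop : Nat.Coprime p N)
    (hf : f = orderOf (p : ZMod N)) (hf2 : 2 * f = N.totient)
    (hq : q = p ^ f)
    (F : Type) [Field F] [Fintype F] [Algebra (ZMod p) F]
    (γ : Fˣ) (hγ : orderOf γ = q - 1)
    (D : ℕ → Set F)
    (hD : ∀ k, D k = {x : F | ∃ i < p1 ^ (m - 1), ∃ t : ℕ,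
        x = ((γ : F)) ^ (i + k * p1 ^ (m - 1) + N * t)}) :
    (∀ a < N, ∃! ij : ℕ × ℕ, (ij.1 < p1 ^ (m - 1) ∧ ij.2 < p1) ∧
        (a : ZMod N) = -((ij.1 : ℕ) : ZMod N) + ((p1 ^ (m - 1) * ij.2 : ℕ) : ZMod N)) ∧
    (∀ a a' : ℕ, a < N → a' < N →
      ∀ i i' j : ℕ, i < p1 ^ (m - 1) → i' < p1 ^ (m - 1) → j < p1 →
        (a : ZMod N) = -((i : ℕ) : ZMod N) + ((p1 ^ (m - 1) * j : ℕ) : ZMod N) →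
        (a' : ZMod N) = -((i' : ℕ) : ZMod N) + ((p1 ^ (m - 1) * j : ℕ) : ZMod N) →
        ∀ k < p1,
          ∑ x ∈ (Set.toFinite (D k)).toFinset,
            Complex.exp (2 * (Real.pi : ℂ) * Complex.I *
              ((Algebra.trace (ZMod p) F ((γ : F) ^ a * x)).val : ℂ) / (p : ℂ)) =
          ∑ x ∈ (Set.toFinite (D k)).toFinset,
            Complex.exp (2 * (Real.pi : ℂ) * Complex.I *
              ((Algebra.trace (ZMod p) F ((γ : F) ^ a' * x)).val : ℂ) / (p : ℂ))) := by
  have := Fact.mk hp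
  obtain ⟨m, rfl⟩ : ∃ n, m = n + 1 := ⟨m - 1, by omega⟩
  subst hN hf hq
  simp only [Nat.add_sub_cancel] at hD ⊢
  have hMN : p1 ^ m * p1 = p1 ^ (m + 1) := (pow_succ p1 m).symm
  have : NeZero (p1 ^ (m + 1)) := ⟨pow_ne_zero _ hp1.ne_zero⟩
  have hNγ : p1 ^ (m + 1) ∣ orderOf γ := by
    rw [hγ, ← Nat.modEq_iff_dvd' (Nat.one_le_pow _ _ hp.pos), ← ZMod.natCast_eq_natCast_iff]
    push_cast
    exact (pow_orderOf_eq_one _).symm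
  refine ⟨fun a _ => existsUnique_neg_add_mul hMN a, ?_⟩
  intro a a' _ _ i i' j hi hi' _ ha ha' k _
  have hsum : ∀ b i : ℕ, i < p1 ^ m →
      (b : ZMod (p1 ^ (m + 1))) = -(i : ZMod _) + ((p1 ^ m * j : ℕ) : ZMod _) →
      ∑ x ∈ (Set.toFinite (D k)).toFinset, canonicalAddChar p ((γ : F) ^ b * x) =
        ∑ r ∈ range (p1 ^ m), gaussPeriod p (p1 ^ (m + 1)) γ (p1 ^ m * (j + k + p1) + r) := by
    intro b i hi hb
    rw [sum_canonicalAddChar_eq_sum_gaussPeriod hNγ (Nat.pow_le_pow_right hp1.pos m.le_succ) b _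
      (hD k)]
    refine sum_range_eq_of_neg_add_mul hMN (fun c c' => gaussPeriod_congr)
      (fun c => gaussPeriod_add_of_not_dvd hp1 (hp1.odd_of_ne_two (by omega)) hcop hf2)
      hp1.pos hi ?_
    push_cast at hb ⊢
    rw [hb]
    ring
  exact (hsum a i hi ha).trans (hsum a' i' hi' ha').symm

/-- For `N = p1^m`, every `a` has a unique representation
`a ≡ -i_a + p1^(m-1)*j_a (mod N)`, and the additive character sum of `ψ` over
`γ^a * D_k` depends only on `j_a` and `k`, not on `i_a`. -/
theorem char_sum_indep_prime_power
    (p1 m N p f q : ℕ)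
    (hp1 : p1.Prime) (hp1_gt : 3 < p1) (hp1_mod : p1 % 4 = 3)
    (hm : 1 ≤ m) (hN : N = p1 ^ m)
    (hp : p.Prime) (hcop : Nat.Coprime p N)
    (hf : f = orderOf (p : ZMod N)) (hf2 : 2 * f = N.totient)
    (hq : q = p ^ f)
    (F : Type) [Field F] [Fintype F] [Algebra (ZMod p) F]
    (hF : Fintype.card F = q)
    (γ : Fˣ) (hγ : orderOf γ = q - 1)
    (D : ℕ → Set F)
    (hD : ∀ k, D k = {x : F | ∃ i < p1 ^ (m - 1), ∃ t : ℕ,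
        x = ((γ : F)) ^ (i + k * p1 ^ (m - 1) + N * t)}) :
    (∀ a < N, ∃! ij : ℕ × ℕ, (ij.1 < p1 ^ (m - 1) ∧ ij.2 < p1) ∧
        (a : ZMod N) = -((ij.1 : ℕ) : ZMod N) + ((p1 ^ (m - 1) * ij.2 : ℕ) : ZMod N)) ∧
    (∀ a a' : ℕ, a < N → a' < N →
      ∀ i i' j : ℕ, i < p1 ^ (m - 1) → i' < p1 ^ (m - 1) → j < p1 →
        (a : ZMod N) = -((i : ℕ) : ZMod N) + ((p1 ^ (m - 1) * j : ℕ) : ZMod N) →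
        (a' : ZMod N) = -((i' : ℕ) : ZMod N) + ((p1 ^ (m - 1) * j : ℕ) : ZMod N) →
        ∀ k < p1,
          ∑ x ∈ (Set.toFinite (D k)).toFinset,
            Complex.exp (2 * (Real.pi : ℂ) * Complex.I *
              ((Algebra.trace (ZMod p) F ((γ : F) ^ a * x)).val : ℂ) / (p : ℂ)) =
          ∑ x ∈ (Set.toFinite (D k)).toFinset,
            Complex.exp (2 * (Real.pi : ℂ) * Complex.I *
              ((Algebra.trace (ZMod p) F ((γ : F) ^ a' * x)).val : ℂ) / (p : ℂ))) :=
  char_sum_indep_prime_power_general p1 m N p f q hp1 hp1_gt hm hN hp hcop hf hf2 hq F γ hγ D hD
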